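/- For each x ∈ S^6, the linear map f(x) on ℝ^7 ≅ Im O induced by conjugation by e0 + √3·x is orthogonal: it preserves the Euclidean inner product on Im O. -/

import Mathlib

noncomputable section

/-- The octonions, realized by Cayley–Dickson doubling of the quaternions. -/
abbrev Octo := Quaternion ℝ × Quaternion ℝ

namespace Octo

/-- Octonion multiplication (Cayley–Dickson formula). -/
def mul' (x y : Octo) : Octo :=
  (x.1 * y.1 - star y.2 * x.2, y.2 * x.1 + x.2 * star y.1)

/-- The unit octonion `e0`. -/
def one' : Octo := (1, 0)

/-- Octonionic conjugation. -/
def conj' (x : Octo) : Octo := (star x.1, -x.2)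

/-- The real part of an octonion. -/
def re' (x : Octo) : ℝ := x.1.re

/-- The Euclidean inner product on the octonions `≅ ℝ^8`. -/
def dot (x y : Octo) : ℝ :=
  x.1.re * y.1.re + x.1.imI * y.1.imI + x.1.imJ * y.1.imJ + x.1.imK * y.1.imK +
  x.2.re * y.2.re + x.2.imI * y.2.imI + x.2.imJ * y.2.imJ + x.2.imK * y.2.imK

/-- The squared Euclidean norm of an octonion. -/
def norm2 (x : Octo) : ℝ := dot x x

/-- The imaginary part of an octonion. -/
def im' (x : Octo) : Octo := x - (re' x) • one'

end Octo

/-- Conjugation by `e0 + √3·x` : `u ↦ (1/4)·((e0+√3x)·u)·(e0−√3x)`. -/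
def conjMap (x : Octo) (u : Octo) : Octo :=
  (4 : ℝ)⁻¹ • Octo.mul' (Octo.mul' (Octo.one' + Real.sqrt 3 • x) u)
    (Octo.one' - Real.sqrt 3 • x)

/-! The octonion norm is multiplicative (Cayley–Dickson doubling of a composition algebra), and
for a unit imaginary octonion `x` both `e0 + √3x` and `e0 − √3x` have squared norm `1 + 3 = 4`.
Hence `f(x)` preserves the norm; being additive, it preserves the inner product by polarization. -/

open Quaternion

theorem Quaternion.re_mul_comm (a b : ℍ[ℝ]) : (a * b).re = (b * a).re := by
  simp only [Quaternion.re_mul]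
  ring

namespace Octo

theorem dot_eq (x y : Octo) : dot x y = (x.1 * star y.1).re + (x.2 * star y.2).re := by
  simp only [dot, Quaternion.re_mul, Quaternion.re_star, Quaternion.imI_star,
    Quaternion.imJ_star, Quaternion.imK_star]
  ring

theorem norm2_eq (x : Octo) : norm2 x = normSq x.1 + normSq x.2 := by
  rw [norm2, dot_eq, normSq_def, normSq_def]

theorem norm2_add (x y : Octo) : norm2 (x + y) = norm2 x + norm2 y + 2 * dot x y := by
  simp only [norm2_eq, dot_eq, Prod.fst_add, Prod.snd_add, normSq_add]
  ring

theorem norm2_smul (c : ℝ) (x : Octo) : norm2 (c • x) = c ^ 2 * norm2 x := by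
  simp only [norm2_eq, Prod.smul_fst, Prod.smul_snd, normSq_smul]
  ring

/-- The two cross terms cancel because `re (p * q) = re (q * p)` for quaternions. -/
theorem norm2_mul' (x y : Octo) : norm2 (mul' x y) = norm2 x * norm2 y := by
  obtain ⟨a, b⟩ := x
  obtain ⟨c, d⟩ := y
  have hcross : (a * c * star (star d * b)).re = (d * a * star (b * star c)).re := by
    rw [star_mul, star_mul, star_star, star_star, ← mul_assoc, Quaternion.re_mul_comm,
      ← mul_assoc, ← mul_assoc, mul_assoc (d * a)]
  simp only [norm2_eq, mul', sub_eq_add_neg, normSq_add, normSq_neg, star_neg, mul_neg,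
    Quaternion.re_neg, map_mul, normSq_star]
  rw [hcross]
  ring

theorem mul'_add (x y z : Octo) : mul' x (y + z) = mul' x y + mul' x z := by
  ext1 <;> simp only [mul', Prod.fst_add, Prod.snd_add, star_add, mul_add, add_mul] <;> abel

theorem add_mul' (x y z : Octo) : mul' (x + y) z = mul' x z + mul' y z := by
  ext1 <;> simp only [mul', Prod.fst_add, Prod.snd_add, mul_add, add_mul] <;> abel

theorem norm2_one' : norm2 one' = 1 := by
  simp [norm2, dot, one']

theorem dot_one'_left (y : Octo) : dot one' y = re' y := by
  simp [dot, one', re']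

theorem norm2_one'_add_smul (t : ℝ) (x : Octo) :
    norm2 (one' + t • x) = 1 + 2 * t * re' x + t ^ 2 * norm2 x := by
  rw [norm2_add, norm2_one', norm2_smul, dot_one'_left]
  simp only [re', Prod.smul_fst, Quaternion.re_smul, smul_eq_mul]
  ring

theorem dot_eq_of_norm2_map_eq {f : Octo → Octo} (hadd : ∀ u v, f (u + v) = f u + f v)
    (hf : ∀ u, norm2 (f u) = norm2 u) (u v : Octo) : dot (f u) (f v) = dot u v := by
  have h := hf (u + v)
  rw [hadd, norm2_add, norm2_add, hf, hf] at h
  linarith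

end Octo

open Octo

theorem conjMap_add (x u v : Octo) : conjMap x (u + v) = conjMap x u + conjMap x v := by
  simp only [conjMap, mul'_add, add_mul', smul_add]

theorem norm2_conjMap (x u : Octo) (him : re' x = 0) (hx : norm2 x = 1) :
    norm2 (conjMap x u) = norm2 u := by
  have h3 : Real.sqrt 3 ^ 2 = 3 := Real.sq_sqrt (by norm_num)
  rw [conjMap, norm2_smul, norm2_mul', norm2_mul', sub_eq_add_neg, ← neg_smul,
    norm2_one'_add_smul, norm2_one'_add_smul, him, hx, neg_sq, h3]
  ring

/-- For `x ∈ S⁶`, the map `f(x)` on `Im 𝕆 ≅ ℝ⁷` induced by conjugation by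
`e0+√3x` is orthogonal: it preserves the Euclidean inner product. -/
theorem stmt6 (x : Octo) (him : Octo.re' x = 0) (hx : Octo.norm2 x = 1) :
    ∀ u w : Octo, Octo.re' u = 0 → Octo.re' w = 0 →
      Octo.dot (conjMap x u) (conjMap x w) = Octo.dot u w := by
  intro u w _ _
  exact dot_eq_of_norm2_map_eq (conjMap_add x) (fun v => norm2_conjMap x v him hx) u w
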